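/- arXiv:1606.06490 — 3 statements merged into one kernel-verified Lean document; each statement's English description precedes it below -/
import Mathlib

section
/- Fix an SNR γ > 0, a blocklength m > 0, and a coding rate r < C(γ) such that (C(γ) − r)·√(m/V(γ)) ≥ 4/√(2π). Then the single-link finite-blocklength error probability ε(r) = P(γ,r,m), as a function of r, satisfies the strict inequality ε''(r) > 4·(ε'(r))², where ε' and ε'' denote the first and second derivatives with respect to r. (Pointwise inequality used in the proof of Proposition 1) -/
open MeasureTheory

/-- The Gaussian Q-function: `Q(w) = ∫_w^∞ (1/√(2π)) e^{−t²/2} dt`. -/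
noncomputable def Qfun (w : ℝ) : ℝ :=
  ∫ t in Set.Ioi w, (1 / Real.sqrt (2 * Real.pi)) * Real.exp (-t ^ 2 / 2)

/-- Shannon capacity `C(γ) = log₂(1+γ)`. -/
noncomputable def Cap (γ : ℝ) : ℝ := Real.logb 2 (1 + γ)

/-- Channel dispersion `V(γ) = (1 − (1+γ)^{−2})·(log₂ e)²`. -/
noncomputable def Vdisp (γ : ℝ) : ℝ :=
  (1 - ((1 + γ) ^ 2)⁻¹) * Real.logb 2 (Real.exp 1) ^ 2

/-- Single-link finite-blocklength error probability `P(γ,r,m)`. -/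
noncomputable def Perr (γ r m : ℝ) : ℝ :=
  Qfun ((Cap γ - r) / Real.sqrt (Vdisp γ / m))

/-- Instantaneous SNR in the Jakes outdated-CSI model: `γ = γ̄|ρĥ + √(1−ρ²)z|²`. -/
noncomputable def instSNR (ρ γbar : ℝ) (hhat z : ℂ) : ℝ :=
  γbar * ‖(ρ : ℂ) * hhat + (Real.sqrt (1 - ρ ^ 2) : ℂ) * z‖ ^ 2

/-- Expected single-link error under outdated CSI:
`ε̄(r) = ∫_ℂ (1/π) e^{−|z|²} P(γ̄|ρĥ + √(1−ρ²)z|², r, m) dz`. -/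
noncomputable def expErr (m ρ γbar : ℝ) (hhat : ℂ) (r : ℝ) : ℝ :=
  ∫ z : ℂ, (1 / Real.pi) * Real.exp (-‖z‖ ^ 2) * Perr (instSNR ρ γbar hhat z) r m

open Real Set

/-!
The error probability is `Q(w(r))` with `w(r) = (C(γ) - r) k`, `k = √(m/V(γ))`, affine in `r`,
and `Q' = -φ`, `φ' = -t φ` for the standard normal density `φ`. Hence `ε' = k φ(w)` and
`ε'' = k² w φ(w)`, so `ε'' > 4 ε'²` amounts to `4 φ(w) < w`, which holds because
`φ(w) < 1/√(2π) ≤ w/4` for the positive `w` of the hypothesis.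
-/

noncomputable def stdNormalPDF (t : ℝ) : ℝ := 1 / √(2 * π) * exp (-t ^ 2 / 2)

lemma stdNormalPDF_pos (t : ℝ) : 0 < stdNormalPDF t := by
  unfold stdNormalPDF; positivity

lemma continuous_stdNormalPDF : Continuous stdNormalPDF := by
  unfold stdNormalPDF; fun_prop

lemma integrable_stdNormalPDF : Integrable stdNormalPDF := by
  convert (integrable_exp_neg_mul_sq (by norm_num : (0 : ℝ) < 1 / 2)).const_mul (1 / √(2 * π))
    using 1
  ext t; rw [stdNormalPDF]; ring_nf

lemma hasDerivAt_stdNormalPDF (t : ℝ) : HasDerivAt stdNormalPDF (-t * stdNormalPDF t) t := by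
  have h := ((((hasDerivAt_pow 2 t).neg).div_const 2).exp).const_mul (1 / √(2 * π))
  refine h.congr_deriv ?_
  simp only [stdNormalPDF, Pi.neg_apply]; push_cast; ring

lemma stdNormalPDF_lt {t : ℝ} (ht : t ≠ 0) : stdNormalPDF t < 1 / √(2 * π) := by
  have : exp (-t ^ 2 / 2) < 1 := exp_lt_one_iff.2 (by linarith [sq_pos_iff.2 ht])
  exact mul_lt_of_lt_one_right (by positivity) this

lemma mul_stdNormalPDF_lt {c t : ℝ} (hc : 0 < c) (ht : c / √(2 * π) ≤ t) :
    c * stdNormalPDF t < t := by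
  have ht0 : 0 < t := lt_of_lt_of_le (by positivity) ht
  calc c * stdNormalPDF t < c * (1 / √(2 * π)) :=
        mul_lt_mul_of_pos_left (stdNormalPDF_lt ht0.ne') hc
    _ = c / √(2 * π) := mul_one_div c _
    _ ≤ t := ht

lemma hasDerivAt_integral_Ioi {E : Type*} [NormedAddCommGroup E] [NormedSpace ℝ E]
    [CompleteSpace E]
    {f : ℝ → E} (hf : Integrable f) {w : ℝ} (hw : ContinuousAt f w) :
    HasDerivAt (fun x => ∫ t in Ioi x, f t) (-f w) w := by
  have h := (intervalIntegral.integral_hasDerivAt_right (a := 0) (hf.intervalIntegrable)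
    hf.aestronglyMeasurable.stronglyMeasurableAtFilter hw).const_sub (∫ t in Ioi 0, f t)
  refine h.congr_of_eventuallyEq (Filter.Eventually.of_forall fun x => ?_)
  dsimp only
  rw [← intervalIntegral.integral_Ioi_sub_Ioi' hf.integrableOn hf.integrableOn, sub_sub_cancel]

lemma hasDerivAt_Qfun (w : ℝ) : HasDerivAt Qfun (-stdNormalPDF w) w :=
  hasDerivAt_integral_Ioi integrable_stdNormalPDF continuous_stdNormalPDF.continuousAt

lemma Perr_eq_Qfun (γ r m : ℝ) : Perr γ r m = Qfun ((Cap γ - r) * √(m / Vdisp γ)) := by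
  rw [Perr, div_eq_mul_inv, ← sqrt_inv, inv_div]

lemma hasDerivAt_sub_mul_const (c k r : ℝ) : HasDerivAt (fun r => (c - r) * k) (-k) r := by
  simpa using ((hasDerivAt_id r).const_sub c).mul_const k

lemma deriv_Qfun_sub_mul (c k : ℝ) :
    deriv (fun r => Qfun ((c - r) * k)) = fun r => k * stdNormalPDF ((c - r) * k) := by
  ext r
  exact ((hasDerivAt_Qfun _).comp r (hasDerivAt_sub_mul_const c k r)).deriv.trans (by ring)

lemma deriv_deriv_Qfun_sub_mul (c k r : ℝ) :
    deriv (deriv (fun r => Qfun ((c - r) * k))) r =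
      k ^ 2 * ((c - r) * k) * stdNormalPDF ((c - r) * k) := by
  rw [deriv_Qfun_sub_mul]
  exact (((hasDerivAt_stdNormalPDF _).comp r (hasDerivAt_sub_mul_const c k r)).const_mul
    k).deriv.trans (by ring)

theorem Perr_second_deriv_gt_four_sq_general
    (γ m r : ℝ)
    (hgap : 4 / Real.sqrt (2 * Real.pi) ≤ (Cap γ - r) * Real.sqrt (m / Vdisp γ)) :
    4 * (deriv (fun r' => Perr γ r' m) r) ^ 2 <
      deriv (deriv (fun r' => Perr γ r' m)) r := by
  simp only [Perr_eq_Qfun]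
  rw [deriv_deriv_Qfun_sub_mul, deriv_Qfun_sub_mul]
  set k := √(m / Vdisp γ)
  set w := (Cap γ - r) * k
  have hk : k ≠ 0 := by
    intro hk0
    have : 0 < 4 / √(2 * π) := by positivity
    simp only [w, hk0, mul_zero] at hgap
    linarith
  have hpos : 0 < k ^ 2 * stdNormalPDF w := mul_pos (sq_pos_iff.2 hk) (stdNormalPDF_pos w)
  have key := mul_stdNormalPDF_lt (by norm_num) hgap
  calc 4 * (k * stdNormalPDF w) ^ 2 = k ^ 2 * stdNormalPDF w * (4 * stdNormalPDF w) := by ring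
    _ < k ^ 2 * stdNormalPDF w * w := mul_lt_mul_of_pos_left key hpos
    _ = k ^ 2 * w * stdNormalPDF w := by ring

/-- Pointwise inequality from the proof of Proposition 1: if `r < C(γ)` and
`(C(γ) − r)·√(m/V(γ)) ≥ 4/√(2π)`, then `ε''(r) > 4·(ε'(r))²` for
`ε(r) = P(γ,r,m)`. -/
theorem Perr_second_deriv_gt_four_sq
    (γ m r : ℝ) (hγ : 0 < γ) (hm : 0 < m) (hr : r < Cap γ)
    (hgap : 4 / Real.sqrt (2 * Real.pi) ≤ (Cap γ - r) * Real.sqrt (m / Vdisp γ)) :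
    4 * (deriv (fun r' => Perr γ r' m) r) ^ 2 <
      deriv (deriv (fun r' => Perr γ r' m)) r :=
  Perr_second_deriv_gt_four_sq_general γ m r hgap
end

section
/- Let ρ ∈ (0,1], ĥ ∈ ℂ, γ̄ > 0, and let z be a standard circularly-symmetric complex Gaussian (i.e., distributed on ℂ ≅ ℝ² with density (1/π)e^{−|z|²}). Set the instantaneous SNR γ = γ̄|ρĥ + √(1−ρ²)z|² and the outdated SNR γ̂ = γ̄|ĥ|². Then for every scheduling weight η with 0 < η ≤ ρ², the probability that the instantaneous SNR is at least ηγ̂ satisfies ℙ(γ ≥ ηγ̂) ≥ 1/2; equivalently, the Gaussian measure of the set {z ∈ ℂ : |ρĥ + √(1−ρ²)z|² ≥ η|ĥ|²} is at least 1/2. (Claim underlying the feasibility constraint η ≤ ρ² and the median statement of equation (3)) -/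
open MeasureTheory

/-!
The set `{z | 0 ≤ ⟪ρĥ, √(1−ρ²) z⟫}` is a half-plane through the origin, so by the symmetry
`z ↦ −z` of the Gaussian it carries at least half of the mass. On it
`|ρĥ + √(1−ρ²) z|² ≥ |ρĥ|² = ρ²|ĥ|² ≥ η|ĥ|²`.
-/

theorem integral_div_two_le_setIntegral_nonneg_of_odd {E : Type*} [MeasurableSpace E] [InvolutiveNeg E]
    [MeasurableNeg E] {μ : Measure E} [μ.IsNegInvariant] {f g : E → ℝ}
    (hf : Integrable f μ) (hf_nonneg : ∀ x, 0 ≤ f x) (hf_even : ∀ x, f (-x) = f x)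
    (hg : Measurable g) (hg_odd : ∀ x, g (-x) = -g x) :
    (∫ x, f x ∂μ) / 2 ≤ ∫ x in {x | 0 ≤ g x}, f x ∂μ := by
  set H := {x | 0 ≤ g x}
  have hH : MeasurableSet H := measurableSet_le measurable_const hg
  have h_neg : ∫ x in Neg.neg ⁻¹' H, f x ∂μ = ∫ x in H, f x ∂μ := by
    simpa only [hf_even] using
      (Measure.measurePreserving_neg μ).setIntegral_preimage_emb
        (MeasurableEquiv.neg E).measurableEmbedding f H
  have h_compl : ∫ x in Hᶜ, f x ∂μ ≤ ∫ x in Neg.neg ⁻¹' H, f x ∂μ := by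
    refine setIntegral_mono_set hf.integrableOn (.of_forall hf_nonneg) (LE.le.eventuallyLE ?_)
    intro x hx
    simp only [H, Set.mem_compl_iff, Set.mem_preimage, Set.mem_ofPred_eq, not_le, hg_odd] at hx ⊢
    linarith
  linarith [integral_add_compl hH hf]

theorem integral_one_div_pi_mul_exp_neg_norm_sq :
    ∫ z : ℂ, 1 / Real.pi * Real.exp (-‖z‖ ^ 2) = 1 := by
  have h := GaussianFourier.integral_rexp_neg_mul_sq_norm (V := ℂ) one_pos
  simp only [neg_mul, one_mul, Complex.finrank_real_complex, div_one] at h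
  rw [integral_const_mul, h]
  norm_num

theorem norm_sq_le_norm_add_sq_of_inner_nonneg {F : Type*} [NormedAddCommGroup F]
    [InnerProductSpace ℝ F] {x y : F} (h : 0 ≤ inner ℝ x y) : ‖x‖ ^ 2 ≤ ‖x + y‖ ^ 2 := by
  rw [norm_add_sq_real]
  nlinarith [sq_nonneg ‖y‖]

theorem mul_outdatedSNR_le_instSNR {ρ γbar η : ℝ} {hhat z : ℂ} (hγ : 0 ≤ γbar)
    (hη : η ≤ ρ ^ 2)
    (hz : 0 ≤ inner ℝ ((ρ : ℂ) * hhat) ((Real.sqrt (1 - ρ ^ 2) : ℂ) * z)) :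
    η * (γbar * ‖hhat‖ ^ 2) ≤ instSNR ρ γbar hhat z := by
  have h_norm : ‖(ρ : ℂ) * hhat‖ ^ 2 = ρ ^ 2 * ‖hhat‖ ^ 2 := by
    rw [norm_mul, mul_pow, Complex.norm_real, Real.norm_eq_abs, sq_abs]
  calc η * (γbar * ‖hhat‖ ^ 2) ≤ γbar * (ρ ^ 2 * ‖hhat‖ ^ 2) := by
        rw [mul_left_comm]
        gcongr
    _ = γbar * ‖(ρ : ℂ) * hhat‖ ^ 2 := by rw [h_norm]
    _ ≤ instSNR ρ γbar hhat z :=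
        mul_le_mul_of_nonneg_left (norm_sq_le_norm_add_sq_of_inner_nonneg hz) hγ

theorem prob_instSNR_ge_weighted_outdated_general
    (ρ γbar η : ℝ) (hhat : ℂ)
    (hγ : 0 < γbar)
    (hη : η ∈ Set.Ioc (0 : ℝ) (ρ ^ 2)) :
    (1 : ℝ) / 2 ≤
      ∫ z in {z : ℂ | η * (γbar * ‖hhat‖ ^ 2) ≤ instSNR ρ γbar hhat z},
        (1 / Real.pi) * Real.exp (-‖z‖ ^ 2) := by
  set g : ℂ → ℝ := fun z ↦ inner ℝ ((ρ : ℂ) * hhat) ((Real.sqrt (1 - ρ ^ 2) : ℂ) * z)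
  have hf_int : Integrable (fun z : ℂ ↦ 1 / Real.pi * Real.exp (-‖z‖ ^ 2)) :=
    .of_integral_ne_zero (by rw [integral_one_div_pi_mul_exp_neg_norm_sq]; exact one_ne_zero)
  have h_half : (1 : ℝ) / 2 ≤ ∫ z in {z | 0 ≤ g z}, 1 / Real.pi * Real.exp (-‖z‖ ^ 2) := by
    simpa only [integral_one_div_pi_mul_exp_neg_norm_sq] using
      integral_div_two_le_setIntegral_nonneg_of_odd (g := g) hf_int (fun z ↦ by positivity) (by simp)
        (by fun_prop) (fun z ↦ by simp only [g, mul_neg, inner_neg_right])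
  refine h_half.trans (setIntegral_mono_set hf_int.integrableOn (.of_forall fun z ↦ by positivity) ?_)
  exact LE.le.eventuallyLE fun z hz ↦ mul_outdatedSNR_le_instSNR hγ.le hη.2 hz

/-- **Median claim underlying the feasibility constraint `η ≤ ρ²` (equation (3)).**
Under the Jakes outdated-CSI model, for every `0 < η ≤ ρ²` the Gaussian measure of
the set of fading realizations with instantaneous SNR at least `ηγ̂` is at least `1/2`. -/
theorem prob_instSNR_ge_weighted_outdated
    (ρ γbar η : ℝ) (hhat : ℂ)
    (hρ : ρ ∈ Set.Ioc (0 : ℝ) 1) (hγ : 0 < γbar)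
    (hη : η ∈ Set.Ioc (0 : ℝ) (ρ ^ 2)) :
    (1 : ℝ) / 2 ≤
      ∫ z in {z : ℂ | η * (γbar * ‖hhat‖ ^ 2) ≤ instSNR ρ γbar hhat z},
        (1 / Real.pi) * Real.exp (-‖z‖ ^ 2) :=
  prob_instSNR_ge_weighted_outdated_general ρ γbar η hhat hγ hη
end

section
/- Fix a blocklength m > 0 and an error target ε ∈ (0, 1/2], and let q ≥ 0 satisfy Q(q) = ε. Then the finite-blocklength rate function γ ↦ R(γ, ε, m) = C(γ) − √(V(γ)/m)·q is strictly increasing on the set {γ > 0 : m·((1+γ)⁴ − (1+γ)²) > q²} (which is an interval of the form (γ₀, +∞)). (Precise version of the paper's claim that the scheduled coding rate is strictly increasing in min{η₁γ̂₁, η₂γ̂₂}) -/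
/-!
Write `u = 1 + γ` and `D(γ) = m (u⁴ - u²)`. Then `√(V(γ)/m) = √D / (m u² log 2)`, and the
derivative of the rate `C(γ) - √(V(γ)/m) q` simplifies to `(1 - q / √D) / (u log 2)`, which is
positive wherever `q² < D`. Since `D` is continuous and strictly increasing on `γ ≥ 0` with
`D(0) = 0`, that region is a half-line `(γ₀, ∞)` by the intermediate value theorem.
-/

open MeasureTheory

open Set

theorem StrictMonoOn.exists_setOf_lt_eq_Ioi {f : ℝ → ℝ} {a b c : ℝ}
    (hf : StrictMonoOn f (Ici a)) (hcont : ContinuousOn f (Ici a)) (hab : a ≤ b)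
    (hfa : f a ≤ c) (hfb : c ≤ f b) :
    ∃ x₀, {x | a < x ∧ c < f x} = Ioi x₀ := by
  obtain ⟨x₀, ⟨hax₀, -⟩, rfl⟩ :=
    intermediate_value_Icc hab (hcont.mono Icc_subset_Ici_self) ⟨hfa, hfb⟩
  refine ⟨x₀, ext fun x => ⟨fun ⟨hax, hfx⟩ => ?_, fun hx => ⟨hax₀.trans_lt hx, ?_⟩⟩⟩
  · exact (hf.lt_iff_lt hax₀ (mem_Ici.2 hax.le)).1 hfx
  · exact hf hax₀ (mem_Ici.2 (hax₀.trans hx.le)) hx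

theorem strictMonoOn_quartic_sub_sq :
    StrictMonoOn (fun γ : ℝ => (1 + γ) ^ 4 - (1 + γ) ^ 2) (Ici 0) := by
  intro a ha b hb hab
  simp only [mem_Ici] at ha hb
  have hsq : (1 + a) ^ 2 < (1 + b) ^ 2 := by nlinarith
  have hsum : 0 < (1 + b) ^ 2 + (1 + a) ^ 2 - 1 := by nlinarith
  nlinarith [mul_pos (sub_pos.2 hsq) hsum]

theorem le_quartic_sub_sq {γ : ℝ} (hγ : 0 ≤ γ) : γ ≤ (1 + γ) ^ 4 - (1 + γ) ^ 2 := by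
  nlinarith [sq_nonneg γ, pow_nonneg hγ 3, pow_nonneg hγ 4]

theorem exists_setOf_sq_lt_eq_Ioi {m : ℝ} (hm : 0 < m) (q : ℝ) :
    ∃ γ₀ : ℝ, {γ : ℝ | 0 < γ ∧ q ^ 2 < m * ((1 + γ) ^ 4 - (1 + γ) ^ 2)} = Ioi γ₀ := by
  refine StrictMonoOn.exists_setOf_lt_eq_Ioi (b := q ^ 2 / m)
    (fun a ha b hb hab => mul_lt_mul_of_pos_left (strictMonoOn_quartic_sub_sq ha hb hab) hm)
    (by fun_prop) (by positivity) (by simp [sq_nonneg]) ?_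
  calc q ^ 2 = m * (q ^ 2 / m) := by field_simp
    _ ≤ _ := mul_le_mul_of_nonneg_left (le_quartic_sub_sq (by positivity)) hm.le

theorem logb_two_exp_one : Real.logb 2 (Real.exp 1) = (Real.log 2)⁻¹ := by
  simp [Real.logb]

theorem hasDerivAt_Cap {γ : ℝ} (hγ : 1 + γ ≠ 0) :
    HasDerivAt Cap (((1 + γ) * Real.log 2)⁻¹) γ :=
  ((((hasDerivAt_id γ).const_add 1).log hγ).div_const (Real.log 2)).congr_deriv (by
    simp [div_eq_mul_inv, mul_comm])

theorem sqrt_Vdisp_div {m γ : ℝ} (hm : 0 < m) (hγ : 1 + γ ≠ 0) :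
    Real.sqrt (Vdisp γ / m) =
      Real.sqrt (m * ((1 + γ) ^ 4 - (1 + γ) ^ 2)) / (m * (1 + γ) ^ 2 * Real.log 2) := by
  rw [← Real.sqrt_sq (by positivity : 0 ≤ m * (1 + γ) ^ 2 * Real.log 2),
    ← Real.sqrt_div' _ (by positivity)]
  congr 1
  rw [Vdisp, logb_two_exp_one]
  field_simp

theorem hasDerivAt_sqrt_Vdisp_div {m γ : ℝ} (hm : 0 < m) (hγ : 0 < γ) :
    HasDerivAt (fun γ => Real.sqrt (Vdisp γ / m))
      (((1 + γ) * Real.log 2 * Real.sqrt (m * ((1 + γ) ^ 4 - (1 + γ) ^ 2)))⁻¹) γ := by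
  have hD : 0 < Real.sqrt (m * ((1 + γ) ^ 4 - (1 + γ) ^ 2)) :=
    Real.sqrt_pos.2 (mul_pos hm (hγ.trans_le (le_quartic_sub_sq hγ.le)))
  have hV : HasDerivAt (fun γ => Vdisp γ / m)
      (2 / ((1 + γ) ^ 3 * Real.log 2 ^ 2 * m)) γ := by
    have hsq : HasDerivAt (fun γ : ℝ => (1 + γ) ^ 2) (2 * (1 + γ)) γ := by
      simpa using ((hasDerivAt_id γ).const_add 1).fun_pow 2
    have h := (hsq.inv (by positivity)).const_sub 1
    refine ((h.mul_const (Real.logb 2 (Real.exp 1) ^ 2)).div_const m).congr_deriv ?_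
    rw [logb_two_exp_one]
    field_simp
  have hVpos : Vdisp γ / m ≠ 0 :=
    (Real.sqrt_pos.1 (by rw [sqrt_Vdisp_div hm (by positivity)]; positivity)).ne'
  refine (hV.sqrt hVpos).congr_deriv ?_
  rw [sqrt_Vdisp_div hm (by positivity)]
  field_simp

theorem hasDerivAt_rate {m γ : ℝ} (hm : 0 < m) (q : ℝ) (hγ : 0 < γ) :
    HasDerivAt (fun γ => Cap γ - Real.sqrt (Vdisp γ / m) * q)
      ((1 - q / Real.sqrt (m * ((1 + γ) ^ 4 - (1 + γ) ^ 2))) / ((1 + γ) * Real.log 2)) γ := by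
  refine ((hasDerivAt_Cap (by positivity)).sub
    ((hasDerivAt_sqrt_Vdisp_div hm hγ).mul_const q)).congr_deriv ?_
  field_simp

theorem rate_strictMonoOn_general
    (m q : ℝ) (hm : 0 < m) :
    StrictMonoOn (fun γ => Cap γ - Real.sqrt (Vdisp γ / m) * q)
      {γ : ℝ | 0 < γ ∧ q ^ 2 < m * ((1 + γ) ^ 4 - (1 + γ) ^ 2)} ∧
    ∃ γ₀ : ℝ, {γ : ℝ | 0 < γ ∧ q ^ 2 < m * ((1 + γ) ^ 4 - (1 + γ) ^ 2)} = Set.Ioi γ₀ := by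
  obtain ⟨γ₀, hS⟩ := exists_setOf_sq_lt_eq_Ioi hm q
  refine ⟨strictMonoOn_of_deriv_pos (hS ▸ convex_Ioi γ₀)
    (fun γ hγ => (hasDerivAt_rate hm q hγ.1).continuousAt.continuousWithinAt) fun γ hγ => ?_,
    γ₀, hS⟩
  obtain ⟨hγ, hq⟩ := interior_subset hγ
  have hD : 0 < Real.sqrt (m * ((1 + γ) ^ 4 - (1 + γ) ^ 2)) :=
    Real.sqrt_pos.2 ((sq_nonneg q).trans_lt hq)
  rw [(hasDerivAt_rate hm q hγ).deriv]
  exact div_pos (sub_pos.2 ((div_lt_one hD).2 (Real.lt_sqrt_of_sq_lt hq))) (by positivity)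

/-- The finite-blocklength rate function `γ ↦ C(γ) − √(V(γ)/m)·q` (with `Q(q) = ε`,
`ε ∈ (0, 1/2]`, `q ≥ 0`) is strictly increasing on
`{γ > 0 : m·((1+γ)⁴ − (1+γ)²) > q²}`, a set which is an interval `(γ₀, +∞)`. -/
theorem rate_strictMonoOn
    (m εth q : ℝ) (hm : 0 < m)
    (hεth : εth ∈ Set.Ioc (0 : ℝ) (1 / 2))
    (hq : 0 ≤ q) (hQq : Qfun q = εth) :
    StrictMonoOn (fun γ => Cap γ - Real.sqrt (Vdisp γ / m) * q)
      {γ : ℝ | 0 < γ ∧ q ^ 2 < m * ((1 + γ) ^ 4 - (1 + γ) ^ 2)} ∧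
    ∃ γ₀ : ℝ, {γ : ℝ | 0 < γ ∧ q ^ 2 < m * ((1 + γ) ^ 4 - (1 + γ) ^ 2)} = Set.Ioi γ₀ :=
  rate_strictMonoOn_general m q hm
end
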